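/- In the full-information line framework, suppose the mechanism (ρ, W) has distortion strictly smaller than 3, i.e., max(SW(I,0), SW(I,1)) < 3·SW(I, win(I)) for every instance I, and suppose that for some integer ℓ ≥ 1, W applied to the multiset consisting of ℓ copies of the pair (0,1) and ℓ+1 copies of the pair (1,1) equals 1 (alternative 1 wins whenever ℓ size-one groups are represented by 0 and ℓ+1 size-one groups are represented by 1). Then ρ of the singleton group {(2ℓ+3)/(4ℓ+4)} equals 0. -/
import Mathlib


/-! Full-information line framework: the two alternatives are the reals 0 and 1.
A group is a finite nonempty multiset of reals in `[0,1]`; an instance is a finite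
nonempty multiset of groups. -/

/-- Social welfare of alternative `x` in instance `I`. -/
noncomputable def SWfull (I : Multiset (Multiset ℝ)) (x : ℝ) : ℝ :=
  (I.map (fun S => (S.map (fun p => |p - x|)).sum)).sum

/-- Winner of instance `I` under the mechanism `(ρ, W)`: `W` applied to the multiset of
pairs (representative, group size). -/
noncomputable def winFull (ρ : Multiset ℝ → ℝ) (W : Multiset (ℝ × ℕ) → ℝ)
    (I : Multiset (Multiset ℝ)) : ℝ :=
  W (I.map (fun S => (ρ S, Multiset.card S)))

/-- A valid instance: a finite nonempty multiset of nonempty groups of reals in `[0,1]`. -/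
def ValidInstanceFull (I : Multiset (Multiset ℝ)) : Prop :=
  I ≠ 0 ∧ ∀ S ∈ I, S ≠ 0 ∧ ∀ p ∈ S, p ∈ Set.Icc (0 : ℝ) 1

/-- A valid full-information distributed mechanism: `ρ` assigns to every group a
representative in `{0,1}`, and `W` assigns to every finite nonempty multiset of pairs
(representative, positive group size) a winner occurring as a first component. -/
def ValidMechFull (ρ : Multiset ℝ → ℝ) (W : Multiset (ℝ × ℕ) → ℝ) : Prop :=
  (∀ S : Multiset ℝ, S ≠ 0 → (∀ p ∈ S, p ∈ Set.Icc (0 : ℝ) 1) → ρ S = 0 ∨ ρ S = 1) ∧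
  (∀ m : Multiset (ℝ × ℕ), m ≠ 0 → (∀ q ∈ m, (q.1 = 0 ∨ q.1 = 1) ∧ 0 < q.2) →
    W m ∈ m.map Prod.fst)

/-- If a full-information mechanism with distortion strictly smaller
than 3 chooses alternative 1 as the winner whenever `ℓ` size-one groups are represented
by 0 and `ℓ+1` size-one groups are represented by 1, then it must represent the singleton
group located at `(2ℓ+3)/(4ℓ+4)` by alternative 0. -/
theorem full_info_majority_forces_representative
    (ρ : Multiset ℝ → ℝ) (W : Multiset (ℝ × ℕ) → ℝ)
    (hmech : ValidMechFull ρ W)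
    (hdist : ∀ I : Multiset (Multiset ℝ), ValidInstanceFull I →
      max (SWfull I 0) (SWfull I 1) < 3 * SWfull I (winFull ρ W I))
    (ℓ : ℕ) (hℓ : 1 ≤ ℓ)
    (hwin : W (Multiset.replicate ℓ ((0 : ℝ), (1 : ℕ)) +
              Multiset.replicate (ℓ + 1) ((1 : ℝ), (1 : ℕ))) = 1) :
    ρ ({(2 * (ℓ : ℝ) + 3) / (4 * (ℓ : ℝ) + 4)} : Multiset ℝ) = 0 := by
  set p : ℝ := (2 * (ℓ : ℝ) + 3) / (4 * (ℓ : ℝ) + 4) with hp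
  have hL : (0:ℝ) ≤ (ℓ:ℝ) := Nat.cast_nonneg ℓ
  have hden : (0:ℝ) < 4 * (ℓ:ℝ) + 4 := by linarith
  have hp0 : 0 ≤ p := by positivity
  have hp1 : p ≤ 1 := by
    rw [hp, div_le_one hden]; linarith
  have hpmem : ∀ q ∈ ({p} : Multiset ℝ), q ∈ Set.Icc (0:ℝ) 1 := by
    intro q hq
    rw [Multiset.mem_singleton] at hq
    exact hq ▸ ⟨hp0, hp1⟩
  -- ρ({1}) = 0
  have h1mem : ∀ q ∈ ({(1:ℝ)} : Multiset ℝ), q ∈ Set.Icc (0:ℝ) 1 := by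
    intro q hq; rw [Multiset.mem_singleton] at hq
    subst hq; exact ⟨zero_le_one, le_rfl⟩
  have hρ1 : ρ ({(1:ℝ)} : Multiset ℝ) = 0 := by
    rcases hmech.1 {(1:ℝ)} (by simp) h1mem with h | h
    · exact h
    · exfalso
      set I : Multiset (Multiset ℝ) := {({(1:ℝ)} : Multiset ℝ)} with hI
      have hvalid : ValidInstanceFull I := by
        refine ⟨by simp [hI], ?_⟩
        intro S hS
        rw [hI, Multiset.mem_singleton] at hS
        subst hS
        exact ⟨by simp, h1mem⟩
      have hwin1 : winFull ρ W I = 1 := by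
        have := hmech.2 (I.map (fun S => (ρ S, Multiset.card S))) (by simp [hI])
          (by intro q hq; simp [hI] at hq; subst hq; simp [h])
        simpa [winFull, hI, h] using this
      have := hdist I hvalid
      rw [hwin1] at this
      have hsw0 : SWfull I 0 = 1 := by simp [SWfull, hI]
      have hsw1 : SWfull I 1 = 0 := by simp [SWfull, hI]
      rw [hsw0, hsw1] at this
      simp at this
      linarith
  -- main argument
  rcases hmech.1 {p} (by simp) hpmem with h | h
  · exact h
  exfalso
  set I : Multiset (Multiset ℝ) :=
    Multiset.replicate ℓ ({(1:ℝ)} : Multiset ℝ) + Multiset.replicate (ℓ+1) ({p} : Multiset ℝ)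
    with hI
  have hvalid : ValidInstanceFull I := by
    constructor
    · rw [hI]; intro hc
      have : Multiset.card (Multiset.replicate ℓ ({(1:ℝ)} : Multiset ℝ) +
        Multiset.replicate (ℓ+1) ({p} : Multiset ℝ)) = 0 := by rw [hc]; simp
      simp at this
    · intro S hS
      rw [hI, Multiset.mem_add] at hS
      rcases hS with hS | hS
      · rw [Multiset.eq_of_mem_replicate hS]
        exact ⟨by simp, h1mem⟩
      · rw [Multiset.eq_of_mem_replicate hS]
        exact ⟨by simp, hpmem⟩
  have hmap : I.map (fun S => (ρ S, Multiset.card S)) =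
      Multiset.replicate ℓ ((0 : ℝ), (1 : ℕ)) + Multiset.replicate (ℓ + 1) ((1 : ℝ), (1 : ℕ)) := by
    rw [hI, Multiset.map_add, Multiset.map_replicate, Multiset.map_replicate, hρ1, h]
    simp
  have hwinI : winFull ρ W I = 1 := by rw [winFull, hmap, hwin]
  have habs1 : |p - 1| = 1 - p := by rw [abs_of_nonpos (by linarith)]; ring
  have habs0 : |p - 0| = p := by rw [sub_zero, abs_of_nonneg hp0]
  have hsw0 : SWfull I 0 = ℓ * 1 + (ℓ + 1) * p := by
    simp [SWfull, hI, Multiset.map_replicate, Multiset.sum_replicate, habs0, nsmul_eq_mul]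
    rw [abs_of_nonneg hp0]; ring
  have hsw1 : SWfull I 1 = (ℓ + 1) * (1 - p) := by
    simp [SWfull, hI, Multiset.map_replicate, Multiset.sum_replicate, habs1, nsmul_eq_mul]
    ring
  have key : (ℓ:ℝ) * 1 + (ℓ + 1) * p = 3 * ((ℓ + 1) * (1 - p)) := by
    rw [hp]; field_simp; ring
  have hd := hdist I hvalid
  rw [hwinI, hsw0, hsw1] at hd
  have := le_max_left (SWfull I 0) (SWfull I 1)
  have h0 : (ℓ:ℝ) * 1 + (ℓ + 1) * p ≤ max ((ℓ:ℝ) * 1 + (ℓ + 1) * p) ((ℓ + 1) * (1 - p)) :=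
    le_max_left _ _
  linarith
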